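/- Fix an integer s ≥ 5 and let σ = (4s+3, 2s+1, s+1, s, 1, …, 1) with s trailing entries equal to 1. Then T^σ_{11s²−33s+25} ≥ 22s² − 22s − 24; that is, there exists α ∈ ℤ_{≥0}^{s+4} with Σ_j α_j(α_j+1) ≤ 2(11s² − 33s + 25) and σ·α = 22s² − 22s − 24 (for instance α = (4s−6, 2s−4, s−2, s−3, 0, …, 0)). -/

import Mathlib

open Finset

/-- `σ` is a changemaker vector: all entries are positive and every integer `k` with
`0 ≤ k ≤ σ_0 + ⋯ + σ_n` is the sum of a subset of the entries. -/
def IsChangemaker {n : ℕ} (σ : Fin (n + 1) → ℕ) : Prop :=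
  (∀ i, 0 < σ i) ∧
    ∀ k : ℕ, k ≤ ∑ i, σ i → ∃ A : Finset (Fin (n + 1)), ∑ i ∈ A, σ i = k

/-- `Tcm σ m = T^σ_m`, the maximum of `σ·α` over all `α ∈ ℤ_{≥0}^{n+1}` with
`Σ_j α_j (α_j + 1) ≤ 2m` (the maximum exists: the set is nonempty and bounded). -/
noncomputable def Tcm {n : ℕ} (σ : Fin (n + 1) → ℕ) (m : ℕ) : ℕ :=
  sSup {t : ℕ | ∃ α : Fin (n + 1) → ℕ,
    (∑ j, α j * (α j + 1)) ≤ 2 * m ∧ t = ∑ j, σ j * α j}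

/-- `Vcm σ i = V^σ_i`, the `i`-th relevant coefficient of `σ`:
the least `m` with `T^σ_m ≥ i` (and `V^σ_0 = 0`). -/
noncomputable def Vcm {n : ℕ} (σ : Fin (n + 1) → ℕ) (i : ℕ) : ℕ :=
  sInf {m : ℕ | i ≤ Tcm σ m}

theorem bddAbove_tcm_set {n : ℕ} (σ : Fin (n + 1) → ℕ) (m : ℕ) :
    BddAbove {t : ℕ | ∃ α : Fin (n + 1) → ℕ,
      (∑ j, α j * (α j + 1)) ≤ 2 * m ∧ t = ∑ j, σ j * α j} := by
  refine ⟨(∑ j, σ j) * (2 * m), ?_⟩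
  rintro _ ⟨α, hα, rfl⟩
  rw [Finset.sum_mul]
  refine Finset.sum_le_sum fun j _ => Nat.mul_le_mul_left _ ?_
  have hj : α j * (α j + 1) ≤ 2 * m :=
    (Finset.single_le_sum (f := fun j => α j * (α j + 1)) (fun _ _ => Nat.zero_le _)
      (Finset.mem_univ j)).trans hα
  nlinarith

theorem le_tcm {n : ℕ} (σ α : Fin (n + 1) → ℕ) {m : ℕ}
    (hα : ∑ j, α j * (α j + 1) ≤ 2 * m) : ∑ j, σ j * α j ≤ Tcm σ m :=
  le_csSup (bddAbove_tcm_set σ m) ⟨α, hα, rfl⟩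

theorem stmt_17 (s : ℕ) (hs : 5 ≤ s) (σ : Fin (s + 3 + 1) → ℕ)
    (hσ : σ = fun j : Fin (s + 3 + 1) => if j.val = 0 then 4 * s + 3
      else if j.val = 1 then 2 * s + 1
      else if j.val = 2 then s + 1
      else if j.val = 3 then s else 1) :
    22 * s ^ 2 - 22 * s - 24 ≤ Tcm σ (11 * s ^ 2 - 33 * s + 25) := by
  -- The witness `(4s - 6, 2s - 4, s - 2, s - 3, 0, …, 0)`, written with `s = t + 5` so that no
  -- truncated subtraction occurs.
  obtain ⟨t, rfl⟩ : ∃ t, s = t + 5 := ⟨s - 5, by omega⟩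
  let α : Fin (t + 5 + 3 + 1) → ℕ := fun j => if j.val = 0 then 4 * t + 14
    else if j.val = 1 then 2 * t + 6
    else if j.val = 2 then t + 3
    else if j.val = 3 then t + 2 else 0
  have hnorm : ∑ j, α j * (α j + 1) = 2 * (11 * (t + 5) ^ 2 - 33 * (t + 5) + 25) := by
    simp only [α, Fin.sum_univ_succ, Fin.val_eq_zero_iff, Fin.succ_ne_zero, Fin.val_succ,
      ↓reduceIte, Nat.add_eq_right, Nat.reduceEqDiff, ite_mul, zero_mul, sum_ite_eq', mem_univ]
    grind
  have hval : ∑ j, σ j * α j = 22 * (t + 5) ^ 2 - 22 * (t + 5) - 24 := by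
    simp only [hσ, α, Fin.sum_univ_succ, Fin.val_eq_zero_iff, Fin.succ_ne_zero, Fin.val_succ,
      ↓reduceIte, Nat.add_eq_right, Nat.reduceEqDiff, mul_ite, ite_mul, one_mul, mul_zero,
      sum_ite_eq', mem_univ]
    grind
  simpa only [hval] using le_tcm σ α hnorm.le
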